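/- arXiv:0807.0271 — 11 statements merged into one kernel-verified Lean document; each statement's English description precedes it below -/
import Mathlib

section
/- Let F be a field, d ≥ 0 an integer, q a nonzero element of F, and a, b, c ∈ F. Then the d+1 scalars θ_i = a + b·q^{2i−d} + c·q^{d−2i} (0 ≤ i ≤ d) are mutually distinct if and only if q^{2i} ≠ 1 for 1 ≤ i ≤ d and b ≠ c·q^{2d−2i} for 1 ≤ i ≤ 2d−1. -/
/-!
The difference of two of the scalars factors as
`θ i - θ j = q^(2j-d) (q^(2(i-j)) - 1) (b - c q^(2d-2(i+j)))`,
so `θ i ≠ θ j` exactly when `q^(2(i-j)) ≠ 1` and `b ≠ c q^(2d-2(i+j))`. For `0 ≤ j < i ≤ d`,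
the difference `i - j` runs through `1, …, d` and the sum `i + j` through `1, …, 2d-1`.
-/

section Theta

variable {F : Type*} [Field F] {q : F}

theorem theta_sub_theta (hq : q ≠ 0) (a b c : F) (d i j : ℤ) :
    (a + b * q ^ (2 * i - d) + c * q ^ (d - 2 * i)) -
      (a + b * q ^ (2 * j - d) + c * q ^ (d - 2 * j)) =
    q ^ (2 * j - d) * (q ^ (2 * (i - j)) - 1) * (b - c * q ^ (2 * d - 2 * (i + j))) := by
  have zpow_mul_zpow (m n k : ℤ) (h : m + n = k) : q ^ m * q ^ n = q ^ k := by
    rw [← zpow_add₀ hq, h]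
  linear_combination
    (c * q ^ (2 * d - 2 * (i + j)) - b) * zpow_mul_zpow (2 * j - d) (2 * (i - j)) (2 * i - d) (by ring)
    - c * zpow_mul_zpow (2 * j - d) (2 * d - 2 * (i + j)) (d - 2 * i) (by ring)
    + c * zpow_mul_zpow (2 * i - d) (2 * d - 2 * (i + j)) (d - 2 * j) (by ring)

theorem theta_ne_theta_iff (hq : q ≠ 0) (a b c : F) (d i j : ℤ) :
    a + b * q ^ (2 * i - d) + c * q ^ (d - 2 * i) ≠ a + b * q ^ (2 * j - d) + c * q ^ (d - 2 * j) ↔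
      q ^ (2 * (i - j)) ≠ 1 ∧ b ≠ c * q ^ (2 * d - 2 * (i + j)) := by
  rw [← sub_ne_zero, theta_sub_theta hq, mul_ne_zero_iff, mul_ne_zero_iff, sub_ne_zero,
    sub_ne_zero, and_assoc, and_iff_right (zpow_ne_zero _ hq)]

end Theta

theorem Nat.exists_ne_add_eq_of_le_two_mul_sub_one {d k : ℕ} (hk : 1 ≤ k) (hkd : k ≤ 2 * d - 1) :
    ∃ i j, i ≤ d ∧ j ≤ d ∧ i ≠ j ∧ i + j = k :=
  if h : k ≤ d then ⟨k, 0, h, d.zero_le, by omega, by omega⟩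
  else ⟨d, k - d, le_rfl, by omega, by omega, by omega⟩

theorem stmt_0 {F : Type*} [Field F] (d : ℕ) (q a b c : F) (hq : q ≠ 0)
    (θ : ℕ → F)
    (hθ : ∀ i : ℕ, i ≤ d → θ i = a + b * q ^ (2 * (i : ℤ) - (d : ℤ)) + c * q ^ ((d : ℤ) - 2 * (i : ℤ))) :
    (∀ i j : ℕ, i ≤ d → j ≤ d → i ≠ j → θ i ≠ θ j) ↔
      ((∀ i : ℕ, 1 ≤ i → i ≤ d → q ^ (2 * i) ≠ 1) ∧
       (∀ i : ℕ, 1 ≤ i → i ≤ 2 * d - 1 → b ≠ c * q ^ (2 * (d : ℤ) - 2 * (i : ℤ)))) := by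
  have theta_ne_iff (i j : ℕ) (hi : i ≤ d) (hj : j ≤ d) :
      θ i ≠ θ j ↔ q ^ (2 * ((i : ℤ) - j)) ≠ 1 ∧ b ≠ c * q ^ (2 * (d : ℤ) - 2 * ((i : ℤ) + j)) := by
    rw [hθ i hi, hθ j hj]
    exact theta_ne_theta_iff hq a b c d i j
  have pow_eq_zpow (k : ℕ) : q ^ (2 * k) = q ^ (2 * (k : ℤ)) := by norm_cast
  constructor
  · intro h
    refine ⟨fun k hk hkd => ?_, fun k hk hkd => ?_⟩
    · simpa [pow_eq_zpow] using
        ((theta_ne_iff k 0 hkd d.zero_le).1 (h k 0 hkd d.zero_le (by omega))).1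
    · obtain ⟨i, j, hi, hj, hij, rfl⟩ := Nat.exists_ne_add_eq_of_le_two_mul_sub_one hk hkd
      simpa using ((theta_ne_iff i j hi hj).1 (h i j hi hj hij)).2
  · rintro ⟨hdiff, hsum⟩ i j hi hj hij
    wlog hji : j < i generalizing i j
    · exact (this j i hj hi hij.symm (by omega)).symm
    refine (theta_ne_iff i j hi hj).2 ⟨?_, by simpa using hsum (i + j) (by omega) (by omega)⟩
    simpa [pow_eq_zpow, Nat.cast_sub hji.le] using hdiff (i - j) (by omega) (by omega)
end

section
/- Let θ_0, …, θ_d be elements of a field F and define, in F[λ], the polynomials τ_i(λ) = (λ−θ_0)(λ−θ_1)⋯(λ−θ_{i−1}) and η_i(λ) = (λ−θ_d)(λ−θ_{d−1})⋯(λ−θ_{d−i+1}). Then η_d = Σ_{i=0}^d η_{d−i}(θ_0) · τ_i, where η_{d−i}(θ_0) denotes the evaluation of the polynomial η_{d−i} at θ_0. -/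
/-!
With `Q i = ∏_{j<i} (λ - θ_{j+1})` and `c i = ∏_{i ≤ j < d} (θ_0 - θ_{j+1})`, the factorisation
`λ - θ_0 = (λ - θ_{i+1}) - (θ_0 - θ_{i+1})` turns `c (i+1) · τ (i+1)` into
`c (i+1) · Q (i+1) - c i · Q i`, so the sum telescopes to `Q d`. Reversing the order of the
factors shows `Q d = η_d` and `c i = η_{d-i}(θ_0)`.
-/

open Polynomial Finset

theorem Finset.prod_range_sub_eq_prod_Ico {M : Type*} [CommMonoid M] (f : ℕ → M) {m d : ℕ}
    (h : m ≤ d) : ∏ j ∈ range m, f (d - j) = ∏ j ∈ Ico (d - m) d, f (j + 1) := by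
  rw [range_eq_Ico, prod_Ico_reflect f 0 (by omega), prod_Ico_add' f (d - m) d 1]
  congr 2; omega

theorem Polynomial.prod_X_sub_C_succ_eq_sum {R : Type*} [CommRing R] (a : ℕ → R) (n : ℕ) :
    ∏ j ∈ range n, (X - C (a (j + 1))) =
      ∑ i ∈ range (n + 1), C (∏ j ∈ Ico i n, (a 0 - a (j + 1))) * ∏ j ∈ range i, (X - C (a j)) := by
  set c : ℕ → R := fun i ↦ ∏ j ∈ Ico i n, (a 0 - a (j + 1))
  set Q : ℕ → R[X] := fun i ↦ ∏ j ∈ range i, (X - C (a (j + 1)))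
  have telescope : ∀ i ∈ range n,
      C (c (i + 1)) * ∏ j ∈ range (i + 1), (X - C (a j)) = C (c (i + 1)) * Q (i + 1) - C (c i) * Q i := by
    intro i hi
    have hc : c i = (a 0 - a (i + 1)) * c (i + 1) := prod_eq_prod_Ico_succ_bot (mem_range.1 hi) _
    rw [prod_range_succ', hc]
    simp only [Q, prod_range_succ, map_mul, map_sub]
    ring
  rw [sum_range_succ', sum_congr rfl telescope, sum_range_sub fun i ↦ C (c i) * Q i]
  simp [c, Q]

theorem stmt_4 {F : Type*} [CommRing F] (d : ℕ) (θ : ℕ → F)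
    (τ η : ℕ → Polynomial F)
    (hτ : ∀ i : ℕ, τ i = ∏ j ∈ Finset.range i, (X - C (θ j)))
    (hη : ∀ i : ℕ, η i = ∏ j ∈ Finset.range i, (X - C (θ (d - j)))) :
    η d = ∑ i ∈ Finset.range (d + 1), C ((η (d - i)).eval (θ 0)) * τ i := by
  have hη' : ∀ m ≤ d, η m = ∏ j ∈ Ico (d - m) d, (X - C (θ (j + 1))) := fun m hm ↦ by
    rw [hη, prod_range_sub_eq_prod_Ico (fun k ↦ X - C (θ k)) hm]
  rw [hη' d le_rfl, Nat.sub_self, ← range_eq_Ico, prod_X_sub_C_succ_eq_sum θ d]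
  refine sum_congr rfl fun i hi ↦ ?_
  rw [hτ, hη' _ (Nat.sub_le d i), Nat.sub_sub_self (by simpa [Nat.lt_succ_iff] using hi), eval_prod]
  simp
end

section
/- Let V be a finite-dimensional vector space over a field F, let θ_0, …, θ_d be mutually distinct elements of F, and let U_0, …, U_d be subspaces with V = U_0 ⊕ ⋯ ⊕ U_d. Suppose A : V → V is a linear map satisfying (A − θ_i)U_i ⊆ U_{i+1} for 0 ≤ i ≤ d (with U_{d+1} = 0). Then A is diagonalizable on V, its eigenvalues are exactly θ_0, …, θ_d (assuming each U_i ≠ 0), and for each i the eigenspace of A for θ_i has dimension equal to dim U_i. -/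
/-! The tails `W i = U i ⊕ ⋯ ⊕ U d` satisfy `(A - θ i) (W i) ⊆ W (i + 1)`, so by rank–nullity
the `θ i`-eigenspace has dimension at least `dim W i - dim W (i + 1) = dim U i`. Eigenspaces for
distinct eigenvalues are independent, so their dimensions add up to at most `dim V = ∑ dim U i`;
this forces equality everywhere, and the eigenspaces span `V`. -/

open Module

section FiniteDimensional

variable {F V : Type*} [Field F] [AddCommGroup V] [Module F V] [FiniteDimensional F V]

theorem finrank_iSup_eq_sum_of_iSupIndep {ι : Type*} [Fintype ι] [DecidableEq ι]
    {p : ι → Submodule F V} (hp : iSupIndep p) :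
    finrank F ↥(⨆ i, p i) = ∑ i, finrank F (p i) := by
  rw [Submodule.iSup_eq_range_dfinsupp_lsum,
    LinearMap.finrank_range_of_inj hp.dfinsupp_lsum_injective]
  exact finrank_directSum F fun i => p i

theorem iSupIndep.iSup_eq_top_and_finrank_eq {ι : Type*} [Fintype ι] [DecidableEq ι]
    {p q : ι → Submodule F V} (hp : DirectSum.IsInternal p) (hq : iSupIndep q)
    (hle : ∀ i, finrank F (p i) ≤ finrank F (q i)) :
    ⨆ i, q i = ⊤ ∧ ∀ i, finrank F (q i) = finrank F (p i) := by
  have hp_sum : ∑ i, finrank F (p i) = finrank F V := by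
    rw [← finrank_iSup_eq_sum_of_iSupIndep hp.submodule_iSupIndep,
      hp.submodule_iSup_eq_top, finrank_top]
  have hsum : ∑ i, finrank F (q i) = ∑ i, finrank F (p i) := by
    refine le_antisymm ?_ (Finset.sum_le_sum fun i _ => hle i)
    rw [hp_sum, ← finrank_iSup_eq_sum_of_iSupIndep hq]
    exact Submodule.finrank_le _
  refine ⟨Submodule.eq_top_of_finrank_eq ?_, fun i => ?_⟩
  · rw [finrank_iSup_eq_sum_of_iSupIndep hq, hsum, hp_sum]
  · exact ((Finset.sum_eq_sum_iff_of_le fun i _ => hle i).mp hsum.symm i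
      (Finset.mem_univ i)).symm

theorem Module.End.finrank_le_finrank_eigenspace_add (f : End F V) (μ : F)
    {W W' : Submodule F V} (h : ∀ v ∈ W, f v - μ • v ∈ W') :
    finrank F W ≤ finrank F (f.eigenspace μ) + finrank F W' := by
  let g : W →ₗ[F] W' := ((f - μ • 1).domRestrict W).codRestrict W' fun v => h v v.2
  have hker : Submodule.map W.subtype (LinearMap.ker g) ≤ f.eigenspace μ := by
    rintro _ ⟨v, hv, rfl⟩
    have hv' : f v - μ • v = 0 := congrArg Subtype.val hv
    rwa [sub_eq_zero, ← Module.End.mem_eigenspace_iff] at hv'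
  calc finrank F W = finrank F (LinearMap.ker g) + finrank F (LinearMap.range g) := by
        rw [add_comm, LinearMap.finrank_range_add_finrank_ker]
    _ ≤ finrank F (f.eigenspace μ) + finrank F W' := by
      gcongr
      · rw [← Submodule.finrank_map_subtype_eq]
        exact Submodule.finrank_mono hker
      · exact Submodule.finrank_le _

end FiniteDimensional

theorem Module.End.exists_eq_of_hasEigenvalue_of_iSup_eigenspace_eq_top {F V ι : Type*}
    [Field F] [AddCommGroup V] [Module F V] {f : End F V} {θ : ι → F}
    (h : ⨆ i, f.eigenspace (θ i) = ⊤) {μ : F} (hμ : f.HasEigenvalue μ) : ∃ i, θ i = μ := by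
  by_contra! hne
  have hdisj :=
    f.eigenspaces_iSupIndep.disjoint_biSup (y := Set.range θ) fun ⟨i, hi⟩ => hne i hi
  rw [iSup_range, h, disjoint_top] at hdisj
  exact Module.End.hasEigenvalue_iff.mp hμ hdisj

section TriangularDecomposition

variable {F V : Type*} [Field F] [AddCommGroup V] [Module F V] {U : ℕ → Submodule F V} {d : ℕ}

def tailSup (U : ℕ → Submodule F V) (d i : ℕ) : Submodule F V :=
  ⨆ j ∈ Finset.Icc i d, U j

theorem le_tailSup {i j : ℕ} (hij : i ≤ j) (hjd : j ≤ d) : U j ≤ tailSup U d i :=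
  le_iSup₂ (f := fun j (_ : j ∈ Finset.Icc i d) => U j) j (Finset.mem_Icc.mpr ⟨hij, hjd⟩)

theorem le_tailSup_of_le_succ (hUd : U (d + 1) = ⊥) {i j : ℕ} (hij : i ≤ j) (hjd : j ≤ d + 1) :
    U j ≤ tailSup U d i := by
  rcases hjd.lt_or_eq with hjd | rfl
  · exact le_tailSup hij (Nat.le_of_lt_succ hjd)
  · exact hUd ▸ bot_le

theorem tailSup_eq_sup {i : ℕ} (hi : i ≤ d) : tailSup U d i = U i ⊔ tailSup U d (i + 1) := by
  rw [tailSup, ← Finset.insert_Icc_add_one_left_eq_Icc hi, Finset.iSup_insert, tailSup]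

theorem disjoint_tailSup_succ (hU : iSupIndep fun j : Fin (d + 1) => U j) {i : ℕ} (hi : i ≤ d) :
    Disjoint (U i) (tailSup U d (i + 1)) := by
  refine (hU ⟨i, Nat.lt_succ_of_le hi⟩).mono_right (iSup₂_le fun j hj => ?_)
  rw [Finset.mem_Icc] at hj
  exact le_iSup₂ (f := fun (k : Fin (d + 1)) (_ : k ≠ ⟨i, _⟩) => U k) ⟨j, by omega⟩
    (by simp [Fin.ext_iff]; omega)

theorem finrank_tailSup [FiniteDimensional F V] (hU : iSupIndep fun j : Fin (d + 1) => U j)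
    {i : ℕ} (hi : i ≤ d) :
    finrank F (tailSup U d i) = finrank F (U i) + finrank F (tailSup U d (i + 1)) := by
  rw [tailSup_eq_sup hi, ← Submodule.finrank_sup_add_finrank_inf_eq,
    (disjoint_tailSup_succ hU hi).eq_bot, finrank_bot, add_zero]

theorem sub_smul_mem_tailSup_succ {A : End F V} {θ : ℕ → F} (hUd : U (d + 1) = ⊥)
    (hA : ∀ i ≤ d, ∀ v ∈ U i, A v - θ i • v ∈ U (i + 1)) {i : ℕ} {v : V}
    (hv : v ∈ tailSup U d i) : A v - θ i • v ∈ tailSup U d (i + 1) := by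
  suffices tailSup U d i ≤ (tailSup U d (i + 1)).comap (A - θ i • 1) from this hv
  refine iSup₂_le fun j hj u hu => ?_
  rw [Finset.mem_Icc] at hj
  have hsplit : (A - θ i • 1) u = (A u - θ j • u) + (θ j - θ i) • u := by
    simp only [LinearMap.sub_apply, LinearMap.smul_apply, Module.End.one_apply]
    module
  rw [Submodule.mem_comap, hsplit]
  refine add_mem (le_tailSup_of_le_succ hUd (by omega) (by omega) (hA j hj.2 u hu)) ?_
  rcases hj.1.eq_or_lt with rfl | hij
  · simp
  · exact Submodule.smul_mem _ _ (le_tailSup hij hj.2 hu)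

theorem finrank_le_finrank_eigenspace_of_sub_smul_mem_succ [FiniteDimensional F V]
    {A : End F V} {θ : ℕ → F} (hU : iSupIndep fun j : Fin (d + 1) => U j) (hUd : U (d + 1) = ⊥)
    (hA : ∀ i ≤ d, ∀ v ∈ U i, A v - θ i • v ∈ U (i + 1)) {i : ℕ} (hi : i ≤ d) :
    finrank F (U i) ≤ finrank F (A.eigenspace (θ i)) := by
  have := A.finrank_le_finrank_eigenspace_add (θ i) fun v hv => sub_smul_mem_tailSup_succ hUd hA hv
  rw [finrank_tailSup hU hi] at this
  omega

end TriangularDecomposition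

theorem stmt_5 {F V : Type*} [Field F] [AddCommGroup V] [Module F V]
    [FiniteDimensional F V] (d : ℕ) (A : Module.End F V) (θ : ℕ → F)
    (hθ : ∀ i j : ℕ, i ≤ d → j ≤ d → i ≠ j → θ i ≠ θ j)
    (U : ℕ → Submodule F V)
    (hUne : ∀ i : ℕ, i ≤ d → U i ≠ ⊥)
    (hUdirect : DirectSum.IsInternal (fun i : Fin (d + 1) => U i))
    (hUd1 : U (d + 1) = ⊥)
    (hA : ∀ i : ℕ, i ≤ d → ∀ v ∈ U i, A v - θ i • v ∈ U (i + 1)) :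
    (⨆ i ∈ Finset.range (d + 1), Module.End.eigenspace A (θ i)) = ⊤ ∧
    (∀ i : ℕ, i ≤ d → Module.End.HasEigenvalue A (θ i)) ∧
    (∀ μ : F, Module.End.HasEigenvalue A μ → ∃ i : ℕ, i ≤ d ∧ μ = θ i) ∧
    (∀ i : ℕ, i ≤ d →
      Module.finrank F (Module.End.eigenspace A (θ i)) = Module.finrank F (U i)) := by
  classical
  have hθinj : Function.Injective fun i : Fin (d + 1) => θ i := fun i j hij =>
    Fin.ext (by_contra fun hne => hθ i j i.is_le j.is_le hne hij)
  have hle (i : Fin (d + 1)) : finrank F (U i) ≤ finrank F (A.eigenspace (θ i)) :=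
    finrank_le_finrank_eigenspace_of_sub_smul_mem_succ hUdirect.submodule_iSupIndep hUd1 hA i.is_le
  obtain ⟨htop, hdim⟩ :=
    (A.eigenspaces_iSupIndep.comp hθinj).iSup_eq_top_and_finrank_eq hUdirect hle
  have hdim' (i : ℕ) (hi : i ≤ d) : finrank F (A.eigenspace (θ i)) = finrank F (U i) :=
    hdim ⟨i, Nat.lt_succ_of_le hi⟩
  refine ⟨top_unique (htop ▸ iSup_le fun i =>
      le_iSup₂_of_le i.1 (Finset.mem_range.mpr i.is_lt) le_rfl),
    fun i hi => ?_, fun μ hμ => ?_, hdim'⟩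
  · rw [Module.End.hasEigenvalue_iff, ← Submodule.finrank_eq_zero.ne, hdim' i hi,
      Submodule.finrank_eq_zero.ne]
    exact hUne i hi
  · obtain ⟨i, rfl⟩ := A.exists_eq_of_hasEigenvalue_of_iSup_eigenspace_eq_top htop hμ
    exact ⟨i, i.is_le, rfl⟩
end

section
/- Let V be a finite-dimensional vector space over a field F, θ_0, …, θ_d mutually distinct scalars, and U_0, …, U_d subspaces with V = ⊕_{i=0}^d U_i. Let A ∈ End(V) satisfy (A − θ_i)U_i ⊆ U_{i+1} (U_{d+1} = 0), so that A is diagonalizable with eigenvalues among θ_0, …, θ_d; let E_iV denote the eigenspace of A for θ_i. Then for every 0 ≤ i ≤ d, E_iV + E_{i+1}V + ⋯ + E_dV = U_i + U_{i+1} + ⋯ + U_d. -/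
/-!
Write `W i = U_i + ⋯ + U_d` and `S i = E_iV + ⋯ + E_dV`. The hypothesis on `A` says that
`A - θ_i` maps `W i` into `W (i + 1)`, and `W 0 = V`. An eigenvector for `θ_j` lies in `W 0`, and if
it lies in `W m` with `m < j` then so does its multiple `(θ_j - θ_m) v = (A - θ_m) v` in `W (m + 1)`;
hence `E_jV ⊆ W j`. Conversely, `A - θ_j` maps `S (j + 1)` onto itself, so for `v ∈ U_j` the vector
`(A - θ_j) v ∈ U_{j+1} ⊆ S (j + 1)` equals `(A - θ_j) w` for some `w ∈ S (j + 1)`; then `v - w ∈ E_jV`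
and `v ∈ S j`, which gives `U_j ⊆ S j` by downward induction on `j`.
-/

open Module.End

theorem antitone_iSup_Icc {α : Type*} [CompleteLattice α] (f : ℕ → α) (d : ℕ) :
    Antitone fun i => ⨆ j ∈ Finset.Icc i d, f j :=
  fun _ _ hii' => biSup_mono fun _ hk => by
    simp only [Finset.mem_Icc] at hk ⊢
    omega

theorem iSup_Icc_zero_eq_top {α : Type*} [CompleteLattice α] {f : ℕ → α} {d : ℕ}
    (hf : ⨆ i : Fin (d + 1), f i = ⊤) : ⨆ j ∈ Finset.Icc 0 d, f j = ⊤ := by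
  rw [eq_top_iff, ← hf]
  exact iSup_le fun i => le_biSup f (by simp [Nat.lt_succ_iff.mp i.2] : i.1 ∈ Finset.Icc 0 d)

section

variable {F V : Type*} [Field F] [AddCommGroup V] [Module F V] (A : Module.End F V)

theorem eigenspace_le_map_sub_smul_one {μ θ : F} (h : μ ≠ θ) :
    eigenspace A μ ≤ (eigenspace A μ).map (A - θ • 1) := by
  intro x hx
  have hAx : A x = μ • x := mem_eigenspace_iff.mp hx
  refine ⟨(μ - θ)⁻¹ • x, Submodule.smul_mem _ _ hx, ?_⟩
  rw [LinearMap.sub_apply, LinearMap.smul_apply, one_apply, map_smul, hAx, smul_comm _ μ,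
    ← sub_smul, smul_smul, mul_inv_cancel₀ (sub_ne_zero.mpr h), one_smul]

theorem iSup_eigenspace_le_map_sub_smul_one {ι : Type*} (θ : ι → F) (s : Set ι) {μ : F}
    (h : ∀ j ∈ s, θ j ≠ μ) :
    ⨆ j ∈ s, eigenspace A (θ j) ≤ (⨆ j ∈ s, eigenspace A (θ j)).map (A - μ • 1) :=
  iSup₂_le fun j hj => (eigenspace_le_map_sub_smul_one A (h j hj)).trans
    (Submodule.map_mono (le_biSup (fun j => eigenspace A (θ j)) hj))

theorem eigenspace_le_of_sub_smul_mem (θ : ℕ → F) (W : ℕ → Submodule F V) (hW0 : W 0 = ⊤)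
    {j : ℕ} (hW : ∀ m < j, ∀ v ∈ W m, A v - θ m • v ∈ W (m + 1))
    (hθ : ∀ m < j, θ j ≠ θ m) : eigenspace A (θ j) ≤ W j := by
  intro v hv
  have hAv : A v = θ j • v := mem_eigenspace_iff.mp hv
  suffices ∀ m ≤ j, v ∈ W m from this j le_rfl
  intro m
  induction m with
  | zero => simp [hW0]
  | succ m ih =>
    intro hm
    have hstep := hW m hm v (ih (by omega))
    rwa [hAv, ← sub_smul, Submodule.smul_mem_iff _ (sub_ne_zero.mpr (hθ m hm))] at hstep

variable {d : ℕ} {θ : ℕ → F} {U : ℕ → Submodule F V}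

theorem sub_smul_mem_iSup_Icc_succ (hUd : U (d + 1) = ⊥)
    (hA : ∀ i ≤ d, ∀ v ∈ U i, A v - θ i • v ∈ U (i + 1)) (m : ℕ) :
    ∀ v ∈ ⨆ j ∈ Finset.Icc m d, U j, A v - θ m • v ∈ ⨆ j ∈ Finset.Icc (m + 1) d, U j := by
  suffices ⨆ j ∈ Finset.Icc m d, U j ≤
      (⨆ j ∈ Finset.Icc (m + 1) d, U j).comap (A - θ m • 1) from fun v hv => this hv
  refine iSup₂_le fun j hj v hv => ?_
  obtain ⟨hmj, hjd⟩ := Finset.mem_Icc.mp hj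
  have hsplit : A v - θ m • v = (A v - θ j • v) + (θ j - θ m) • v := by
    rw [sub_smul]; abel
  simp only [Submodule.mem_comap, LinearMap.sub_apply, LinearMap.smul_apply, one_apply, hsplit]
  refine Submodule.add_mem _ ?_ ?_
  · obtain rfl | hjd := eq_or_lt_of_le hjd
    · have h := hA j le_rfl v hv
      rw [hUd, Submodule.mem_bot] at h
      simp [h]
    · exact le_biSup U (Finset.mem_Icc.mpr ⟨by omega, hjd⟩) (hA j hjd.le v hv)
  · obtain rfl | hmj := eq_or_lt_of_le hmj
    · simp
    · exact Submodule.smul_mem _ _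
        (le_biSup U (Finset.mem_Icc.mpr ⟨hmj, hjd⟩) hv)

theorem le_iSup_Icc_eigenspace (hθ : ∀ i j : ℕ, i ≤ d → j ≤ d → i ≠ j → θ i ≠ θ j)
    (hUd : U (d + 1) = ⊥) (hA : ∀ i ≤ d, ∀ v ∈ U i, A v - θ i • v ∈ U (i + 1)) :
    ∀ j ≤ d + 1, U j ≤ ⨆ k ∈ Finset.Icc j d, eigenspace A (θ k) := by
  set S : ℕ → Submodule F V := fun j => ⨆ k ∈ Finset.Icc j d, eigenspace A (θ k)
  suffices ∀ n j, j + n = d + 1 → U j ≤ S j from fun j hj => this (d + 1 - j) j (by omega)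
  intro n
  induction n with
  | zero => rintro j rfl; simp [hUd]
  | succ n ih =>
    intro j hj v hv
    have hjd : j ≤ d := by omega
    have hS : S (j + 1) ≤ (S (j + 1)).map (A - θ j • 1) := by
      refine iSup_eigenspace_le_map_sub_smul_one A θ _ fun k hk => ?_
      obtain ⟨hjk, hkd⟩ := Finset.mem_Icc.mp hk
      exact hθ k j hkd hjd (by omega)
    obtain ⟨w, hw, hwv⟩ := hS (ih (j + 1) (by omega) (hA j hjd v hv))
    simp only [LinearMap.sub_apply, LinearMap.smul_apply, one_apply] at hwv
    have hvw : v - w ∈ eigenspace A (θ j) := by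
      rw [mem_eigenspace_iff, map_sub, smul_sub, sub_eq_sub_iff_sub_eq_sub]
      exact hwv.symm
    have hEj : eigenspace A (θ j) ≤ S j :=
      le_biSup (fun k => eigenspace A (θ k)) (Finset.mem_Icc.mpr ⟨le_rfl, hjd⟩)
    have hSj : S (j + 1) ≤ S j := antitone_iSup_Icc _ d (Nat.le_succ j)
    rw [← sub_add_cancel v w]
    exact Submodule.add_mem _ (hEj hvw) (hSj hw)

end

theorem stmt_6_general {F V : Type*} [Field F] [AddCommGroup V] [Module F V]
    (d : ℕ) (A : Module.End F V) (θ : ℕ → F)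
    (hθ : ∀ i j : ℕ, i ≤ d → j ≤ d → i ≠ j → θ i ≠ θ j)
    (U : ℕ → Submodule F V)
    (hUdirect : DirectSum.IsInternal (fun i : Fin (d + 1) => U i))
    (hUd1 : U (d + 1) = ⊥)
    (hA : ∀ i : ℕ, i ≤ d → ∀ v ∈ U i, A v - θ i • v ∈ U (i + 1)) :
    ∀ i : ℕ, i ≤ d →
      (⨆ j ∈ Finset.Icc i d, Module.End.eigenspace A (θ j)) =
        ⨆ j ∈ Finset.Icc i d, U j := by
  intro i _
  have hW0 := iSup_Icc_zero_eq_top hUdirect.submodule_iSup_eq_top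
  refine le_antisymm (iSup₂_le fun j hj => ?_) (iSup₂_le fun j hj => ?_)
  all_goals obtain ⟨hij, hjd⟩ := Finset.mem_Icc.mp hj
  · have hEW : eigenspace A (θ j) ≤ ⨆ k ∈ Finset.Icc j d, U k :=
      eigenspace_le_of_sub_smul_mem A θ _ hW0
        (fun m _ => sub_smul_mem_iSup_Icc_succ A hUd1 hA m)
        (fun m hm => hθ j m hjd (by omega) (by omega))
    exact hEW.trans (antitone_iSup_Icc U d hij)
  · exact (le_iSup_Icc_eigenspace A hθ hUd1 hA j (by omega)).trans
      (antitone_iSup_Icc _ d hij)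

theorem stmt_6 {F V : Type*} [Field F] [AddCommGroup V] [Module F V]
    [FiniteDimensional F V] (d : ℕ) (A : Module.End F V) (θ : ℕ → F)
    (hθ : ∀ i j : ℕ, i ≤ d → j ≤ d → i ≠ j → θ i ≠ θ j)
    (U : ℕ → Submodule F V)
    (hUdirect : DirectSum.IsInternal (fun i : Fin (d + 1) => U i))
    (hUd1 : U (d + 1) = ⊥)
    (hA : ∀ i : ℕ, i ≤ d → ∀ v ∈ U i, A v - θ i • v ∈ U (i + 1)) :
    ∀ i : ℕ, i ≤ d →
      (⨆ j ∈ Finset.Icc i d, Module.End.eigenspace A (θ j)) =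
        ⨆ j ∈ Finset.Icc i d, U j :=
  stmt_6_general d A θ hθ U hUdirect hUd1 hA
end

section
/- Let T be a ring, V a T-module, and v ∈ V a nonzero vector. Let e ∈ T be an idempotent such that the submodule eV generated by the image of e is one-dimensional over the base field and v ∈ eV, v ≠ 0. If W is a proper T-submodule of Tv (the submodule generated by v), then eW = 0. -/
/-!
Since `eV` is the line `F v`, a nonzero `e • w` with `w ∈ W` is a nonzero scalar multiple of `v`;
then `v ∈ W`, so `T v ≤ W`, contradicting properness.
-/

theorem Submodule.exists_smul_eq_of_finrank_eq_one {K V : Type*} [DivisionRing K]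
    [AddCommGroup V] [Module K V] {E : Submodule K V} (hE : Module.finrank K E = 1)
    {v : V} (hv : v ∈ E) (hv0 : v ≠ 0) {x : V} (hx : x ∈ E) : ∃ c : K, c • v = x := by
  obtain ⟨c, hc⟩ := (finrank_eq_one_iff_of_nonzero' (⟨v, hv⟩ : E)
    (by simpa using hv0)).mp hE ⟨x, hx⟩
  exact ⟨c, congrArg Subtype.val hc⟩

theorem stmt_7_general {F T V : Type*} [Field F] [Ring T] [Algebra F T]
    [AddCommGroup V] [Module F V] [Module T V] [IsScalarTower F T V]
    (e : T)
    (E : Submodule F V) (hE : (E : Set V) = Set.range (fun w : V => e • w))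
    (hE1 : Module.finrank F E = 1)
    (v : V) (hv : v ∈ E) (hv0 : v ≠ 0)
    (W : Submodule T V) (hW : W < Submodule.span T {v}) :
    ∀ w ∈ W, e • w = 0 := by
  intro w hw
  by_contra hne
  have hewE : e • w ∈ E := by
    rw [← SetLike.mem_coe, hE]
    exact ⟨w, rfl⟩
  obtain ⟨c, hc⟩ := Submodule.exists_smul_eq_of_finrank_eq_one hE1 hv hv0 hewE
  have hc0 : c ≠ 0 := by
    rintro rfl
    exact hne (by rw [← hc, zero_smul])
  have hcvW : c • v ∈ W.restrictScalars F := hc ▸ W.smul_mem e hw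
  have hvW : v ∈ W := ((W.restrictScalars F).smul_mem_iff hc0).mp hcvW
  exact hW.not_ge ((Submodule.span_singleton_le_iff_mem v W).mpr hvW)

theorem stmt_7 {F T V : Type*} [Field F] [Ring T] [Algebra F T]
    [AddCommGroup V] [Module F V] [Module T V] [IsScalarTower F T V]
    [FiniteDimensional F V]
    (e : T) (he : e * e = e)
    (E : Submodule F V) (hE : (E : Set V) = Set.range (fun w : V => e • w))
    (hE1 : Module.finrank F E = 1)
    (v : V) (hv : v ∈ E) (hv0 : v ≠ 0)
    (W : Submodule T V) (hW : W < Submodule.span T {v}) :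
    ∀ w ∈ W, e • w = 0 :=
  stmt_7_general e E hE hE1 v hv hv0 W hW
end

section
/- Let T be an F-algebra, V a T-module which is finite-dimensional over F, e ∈ T an idempotent with eV one-dimensional and eV ≠ 0. Let M = T(eV) be the submodule generated by eV. Then M contains a unique maximal proper T-submodule, namely the sum of all proper T-submodules of M; in particular the sum of any two proper submodules of M is again proper. -/
/-!
A vector of `M = T • eV` not killed by `e` generates `M`: `e` maps it to a nonzero vector of the
line `eV`, which then spans `eV`. Hence every proper submodule of `M` lies in the largest submodule
annihilated by `e`, and that one is proper in `M` because `e` fixes the nonzero vectors of `eV`.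
-/

namespace Submodule

variable {F T V : Type*} [Ring T] [AddCommGroup V] [Module T V]

/-- The largest submodule on which `e` acts as zero. -/
def maxKilledBy (e : T) : Submodule T V where
  carrier := {v | ∀ t : T, e • t • v = 0}
  add_mem' hv hw t := by rw [smul_add, smul_add, hv t, hw t, add_zero]
  zero_mem' t := by rw [smul_zero, smul_zero]
  smul_mem' s v hv t := by rw [smul_smul t s]; exact hv _

theorem le_maxKilledBy_iff {e : T} {W : Submodule T V} :
    W ≤ maxKilledBy e ↔ ∀ w ∈ W, e • w = 0 :=
  ⟨fun h w hw => by simpa using h hw 1, fun h _ hw t => h _ (W.smul_mem t hw)⟩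

theorem le_of_finrank_eq_one [Field F] [Module F V] {E W : Submodule F V}
    (hE : Module.finrank F E = 1) {x : V} (hxE : x ∈ E) (hx : x ≠ 0) (hxW : x ∈ W) : E ≤ W := by
  have : FiniteDimensional F E := Module.finite_of_finrank_eq_succ hE
  have hspan : span F {x} = E :=
    eq_of_le_of_finrank_eq ((span_singleton_le_iff_mem x E).mpr hxE)
      ((finrank_span_singleton hx).trans hE.symm)
  exact hspan ▸ (span_singleton_le_iff_mem x W).mpr hxW

variable [Field F] [Algebra F T] [Module F V] [IsScalarTower F T V]

theorem le_maxKilledBy_of_lt_span {e : T} {E : Submodule F V} (hE : ∀ v : V, e • v ∈ E)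
    (hE1 : Module.finrank F E = 1) {W : Submodule T V} (hW : W < span T (E : Set V)) :
    W ≤ maxKilledBy e := by
  refine le_maxKilledBy_iff.mpr fun w hw => ?_
  by_contra hew
  have hEW : E ≤ W.restrictScalars F :=
    le_of_finrank_eq_one hE1 (hE w) hew (W.smul_mem e hw)
  exact hW.not_ge (span_le.mpr hEW)

end Submodule

open Submodule in
theorem stmt_8_general {F T V : Type*} [Field F] [Ring T] [Algebra F T]
    [AddCommGroup V] [Module F V] [Module T V] [IsScalarTower F T V]
    (e : T) (he : e * e = e)
    (E : Submodule F V) (hE : (E : Set V) = Set.range (fun w : V => e • w))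
    (hE1 : Module.finrank F E = 1) (hEne : E ≠ ⊥)
    (M : Submodule T V) (hM : M = Submodule.span T (E : Set V)) :
    (∀ W W' : Submodule T V, W < M → W' < M → W ⊔ W' < M) ∧
    sSup {W : Submodule T V | W < M} < M ∧
    (∀ W : Submodule T V, W < M → W ≤ sSup {W : Submodule T V | W < M}) := by
  have hE_mem (v : V) : e • v ∈ E := by
    rw [← SetLike.mem_coe, hE]
    exact ⟨v, rfl⟩
  have hproper : M ⊓ maxKilledBy e < M := by
    obtain ⟨x, hxE, hx⟩ := exists_mem_ne_zero_of_ne_bot hEne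
    obtain ⟨w, rfl⟩ : x ∈ Set.range (fun w : V => e • w) := hE ▸ hxE
    have hxM : e • w ∈ M := hM ▸ subset_span hxE
    refine inf_lt_left.mpr fun hM_le => hx ?_
    simpa [smul_smul, he] using le_maxKilledBy_iff.mp hM_le _ hxM
  have hbound (W : Submodule T V) (hW : W < M) : W ≤ M ⊓ maxKilledBy e :=
    le_inf hW.le (le_maxKilledBy_of_lt_span hE_mem hE1 (hM ▸ hW))
  have hsSup_lt : sSup {W : Submodule T V | W < M} < M := (sSup_le hbound).trans_lt hproper
  exact ⟨fun W W' hW hW' => (sup_le (hbound W hW) (hbound W' hW')).trans_lt hproper, hsSup_lt,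
    fun W hW => le_sSup hW⟩

theorem stmt_8 {F T V : Type*} [Field F] [Ring T] [Algebra F T]
    [AddCommGroup V] [Module F V] [Module T V] [IsScalarTower F T V]
    [FiniteDimensional F V]
    (e : T) (he : e * e = e)
    (E : Submodule F V) (hE : (E : Set V) = Set.range (fun w : V => e • w))
    (hE1 : Module.finrank F E = 1) (hEne : E ≠ ⊥)
    (M : Submodule T V) (hM : M = Submodule.span T (E : Set V)) :
    (∀ W W' : Submodule T V, W < M → W' < M → W ⊔ W' < M) ∧
    sSup {W : Submodule T V | W < M} < M ∧
    (∀ W : Submodule T V, W < M → W ≤ sSup {W : Submodule T V | W < M}) :=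
  stmt_8_general e he E hE hE1 hEne M hM
end

section
/- Let β, γ, ϱ ∈ F and θ_0, …, θ_d mutually distinct elements of a field F such that θ_{i−1} − βθ_i + θ_{i+1} = γ for 1 ≤ i ≤ d−1 and θ_{i−1}^2 − βθ_{i−1}θ_i + θ_i^2 − γ(θ_{i−1}+θ_i) = ϱ for 1 ≤ i ≤ d. Define p(λ,μ) = λ^2 − βλμ + μ^2 − γ(λ+μ) − ϱ. Then for 1 ≤ i ≤ d−1 and any 0 ≤ j ≤ d with |i − j| > 1, p(θ_i, θ_j) ≠ 0. -/
/-! The quadratic `μ ↦ p(θᵢ, μ)` is monic with roots `θᵢ₋₁` and `θᵢ₊₁`, so it factors as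
`(μ - θᵢ₋₁)(μ - θᵢ₊₁)`, which is nonzero at every other `θⱼ`. -/

theorem sq_sub_mul_add_sq_sub_eq_mul_of_root {R : Type*} [CommRing R] {β γ ϱ a b x : R}
    (hsum : a - β * x + b = γ)
    (hroot : a ^ 2 - β * a * x + x ^ 2 - γ * (a + x) = ϱ) (y : R) :
    x ^ 2 - β * x * y + y ^ 2 - γ * (x + y) - ϱ = (y - a) * (y - b) := by
  linear_combination (y - a) * hsum + hroot

theorem stmt_13_general {F : Type*} [Field F] (d : ℕ) (θ : ℕ → F)
    (hθ : ∀ i j : ℕ, i ≤ d → j ≤ d → i ≠ j → θ i ≠ θ j)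
    (β γ ϱ : F)
    (hrec1 : ∀ i : ℕ, 1 ≤ i → i ≤ d - 1 → θ (i - 1) - β * θ i + θ (i + 1) = γ)
    (hrec2 : ∀ i : ℕ, 1 ≤ i → i ≤ d →
      θ (i - 1) ^ 2 - β * θ (i - 1) * θ i + θ i ^ 2 - γ * (θ (i - 1) + θ i) = ϱ) :
    ∀ i j : ℕ, 1 ≤ i → i ≤ d - 1 → j ≤ d → 1 < |(i : ℤ) - (j : ℤ)| →
      θ i ^ 2 - β * θ i * θ j + θ j ^ 2 - γ * (θ i + θ j) - ϱ ≠ 0 := by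
  intro i j hi hid hj hij
  rw [sq_sub_mul_add_sq_sub_eq_mul_of_root (hrec1 i hi hid) (hrec2 i hi (by omega))]
  have hij' : 1 < (i : ℤ) - j ∨ 1 < -((i : ℤ) - j) := lt_abs.mp hij
  exact mul_ne_zero (sub_ne_zero.mpr (hθ j (i - 1) hj (by omega) (by omega)))
    (sub_ne_zero.mpr (hθ j (i + 1) hj (by omega) (by omega)))

theorem stmt_13 {F : Type*} [Field F] (d : ℕ) (hd : 2 ≤ d) (θ : ℕ → F)
    (hθ : ∀ i j : ℕ, i ≤ d → j ≤ d → i ≠ j → θ i ≠ θ j)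
    (β γ ϱ : F)
    (hrec1 : ∀ i : ℕ, 1 ≤ i → i ≤ d - 1 → θ (i - 1) - β * θ i + θ (i + 1) = γ)
    (hrec2 : ∀ i : ℕ, 1 ≤ i → i ≤ d →
      θ (i - 1) ^ 2 - β * θ (i - 1) * θ i + θ i ^ 2 - γ * (θ (i - 1) + θ i) = ϱ) :
    ∀ i j : ℕ, 1 ≤ i → i ≤ d - 1 → j ≤ d → 1 < |(i : ℤ) - (j : ℤ)| →
      θ i ^ 2 - β * θ i * θ j + θ j ^ 2 - γ * (θ i + θ j) - ϱ ≠ 0 :=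
  stmt_13_general d θ hθ β γ ϱ hrec1 hrec2
end

section
/- Let V be a finite-dimensional vector space over a field F, A, A* ∈ End(V), with A* diagonalizable with mutually distinct eigenvalues θ*_0, …, θ*_d and corresponding idempotents E*_i, and suppose there is a decomposition V = ⊕ U_i with (A − θ_i)U_i ⊆ U_{i+1} and (A* − θ*_i)U_i ⊆ U_{i−1}, with E*_0V = U_0 and LR − ζ_1 vanishing on U_0, where R acts as A − θ_0 on U_0 and L acts as A* − θ*_1 on U_1. Then E*_0 A E*_0 = a_0 E*_0 on V, where a_0 = θ_0 + ζ_1/(θ*_0 − θ*_1). -/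
/-!
Apply `E*_0` to `(A* - θ*_1)(A - θ_0) w = ζ_1 w` for `w ∈ U_0`: since `E*_0 A* = θ*_0 E*_0`,
the left side becomes `(θ*_0 - θ*_1) E*_0 (A - θ_0) w`, so `E*_0 A w = θ_0 w + ζ_1 / (θ*_0 - θ*_1) w`.
-/

namespace Module.End

section CommRing

variable {R M : Type*} [CommRing R] [AddCommGroup M] [Module R M]

lemma map_sub_smul_of_mul_eq_smul {E B : Module.End R M} {μ : R} (hEB : E * B = μ • E)
    (ν : R) (x : M) : E (B x - ν • x) = (μ - ν) • E x := by
  rw [map_sub, map_smul, ← mul_apply, hEB, LinearMap.smul_apply, sub_smul]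

lemma mul_mul_eq_smul_of_forall_mem_range {E A : Module.End R M} {c : R}
    (h : ∀ w ∈ LinearMap.range E, E (A w) = c • w) : E * A * E = c • E :=
  LinearMap.ext fun v => h (E v) (LinearMap.mem_range_self E v)

end CommRing

variable {F V : Type*} [Field F] [AddCommGroup V] [Module F V]

lemma map_eq_div_smul_of_mul_eq_smul {E B : Module.End F V} {μ ν ζ : F} (hEB : E * B = μ • E)
    (hμν : μ ≠ ν) {w r : V} (hw : E w = w) (hr : B r - ν • r = ζ • w) :
    E r = (ζ / (μ - ν)) • w := by
  have key : (μ - ν) • E r = ζ • w := by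
    rw [← map_sub_smul_of_mul_eq_smul hEB, hr, map_smul, hw]
  rw [div_eq_inv_mul, mul_smul, ← key, inv_smul_smul₀ (sub_ne_zero.mpr hμν)]

end Module.End

open Module.End in
theorem stmt_14_general {F V : Type*} [Field F] [AddCommGroup V] [Module F V]
    (d : ℕ) (hd : 1 ≤ d)
    (A B : Module.End F V) (θ θs : ℕ → F)
    (hθs : ∀ i j : ℕ, i ≤ d → j ≤ d → i ≠ j → θs i ≠ θs j)
    (U : ℕ → Submodule F V)
    (E0 : Module.End F V) (hE0idem : E0 * E0 = E0)
    (hE0range : LinearMap.range E0 = U 0)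
    (hE0B : E0 * B = θs 0 • E0)
    (ζ1 : F) (hζ1 : ∀ w ∈ U 0, B (A w - θ 0 • w) - θs 1 • (A w - θ 0 • w) = ζ1 • w) :
    E0 * A * E0 = (θ 0 + ζ1 / (θs 0 - θs 1)) • E0 := by
  refine mul_mul_eq_smul_of_forall_mem_range fun w hw => ?_
  have hE0w : E0 w = w := (LinearMap.IsIdempotentElem.mem_range_iff hE0idem).mp hw
  have hθs01 : θs 0 ≠ θs 1 := hθs 0 1 d.zero_le hd zero_ne_one
  have hR : E0 (A w - θ 0 • w) = (ζ1 / (θs 0 - θs 1)) • w :=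
    map_eq_div_smul_of_mul_eq_smul hE0B hθs01 hE0w (hζ1 w (hE0range ▸ hw))
  calc E0 (A w) = θ 0 • w + E0 (A w - θ 0 • w) := by
        rw [map_sub, map_smul, hE0w, add_sub_cancel]
    _ = (θ 0 + ζ1 / (θs 0 - θs 1)) • w := by rw [hR, add_smul]

theorem stmt_14 {F V : Type*} [Field F] [AddCommGroup V] [Module F V]
    [FiniteDimensional F V] (d : ℕ) (hd : 1 ≤ d)
    (A B : Module.End F V) (θ θs : ℕ → F)
    (hθ : ∀ i j : ℕ, i ≤ d → j ≤ d → i ≠ j → θ i ≠ θ j)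
    (hθs : ∀ i j : ℕ, i ≤ d → j ≤ d → i ≠ j → θs i ≠ θs j)
    (U : ℕ → Submodule F V)
    (hUdirect : DirectSum.IsInternal (fun i : Fin (d + 1) => U i))
    (hUd1 : U (d + 1) = ⊥)
    (hA : ∀ i : ℕ, i ≤ d → ∀ v ∈ U i, A v - θ i • v ∈ U (i + 1))
    (hB0 : ∀ v ∈ U 0, B v = θs 0 • v)
    (hB : ∀ i : ℕ, 1 ≤ i → i ≤ d → ∀ v ∈ U i, B v - θs i • v ∈ U (i - 1))
    (E0 : Module.End F V) (hE0idem : E0 * E0 = E0)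
    (hE0range : LinearMap.range E0 = U 0)
    (hE0B : E0 * B = θs 0 • E0)
    (ζ1 : F) (hζ1 : ∀ w ∈ U 0, B (A w - θ 0 • w) - θs 1 • (A w - θ 0 • w) = ζ1 • w) :
    E0 * A * E0 = (θ 0 + ζ1 / (θs 0 - θs 1)) • E0 :=
  stmt_14_general d hd A B θ θs hθs U E0 hE0idem hE0range hE0B ζ1 hζ1
end

section
/- Let F be a field, and suppose a sharp tridiagonal system Φ over F has eigenvalue sequence {θ_i}, dual eigenvalue sequence {θ*_i}, and split sequence {ζ_i} defined by E*_0 τ_i(A) E*_0 = ζ_i E*_0 / ((θ*_0−θ*_1)⋯(θ*_0−θ*_i)). If E*_0 E_d E*_0 ≠ 0 on V, then ζ_d ≠ 0, where E_d = τ_d(A)/τ_d(θ_d). Conversely, if ζ_d ≠ 0 then E*_0 E_d E*_0 = τ_d(θ_d)^{−1} η*_d(θ*_0)^{−1} ζ_d E*_0 ≠ 0. -/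
open Polynomial Finset

lemma prod_sub_ne_zero {ι F : Type*} [Field F] {s : Finset ι} {f : ι → F} {a : ι}
    (h : ∀ j ∈ s, f a ≠ f j) : ∏ j ∈ s, (f a - f j) ≠ 0 :=
  prod_ne_zero_iff.mpr fun j hj ↦ sub_ne_zero.mpr (h j hj)

lemma mul_smul_mul_eq_smul {R S : Type*} [CommSemiring R] [Semiring S] [Algebra R S]
    {e p : S} {c : R} (h : e * p * e = c • e) (a : R) :
    e * (a • p) * e = (a * c) • e := by
  rw [mul_smul_comm, smul_mul_assoc, h, smul_smul]

theorem stmt_15_general {F V : Type*} [Field F] [AddCommGroup V] [Module F V]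
    (d : ℕ)
    (A : Module.End F V) (θ θs : ℕ → F)
    (hθ : ∀ i j : ℕ, i ≤ d → j ≤ d → i ≠ j → θ i ≠ θ j)
    (hθs : ∀ i j : ℕ, i ≤ d → j ≤ d → i ≠ j → θs i ≠ θs j)
    (Es0 : Module.End F V) (hEs0 : Es0 ≠ 0)
    (Ed : Module.End F V)
    (hEd : Ed = (∏ j ∈ Finset.range d, (θ d - θ j))⁻¹ •
      Polynomial.aeval A (∏ j ∈ Finset.range d, (X - C (θ j))))
    (ζ : ℕ → F)
    (hζ : ∀ i : ℕ, i ≤ d →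
      Es0 * Polynomial.aeval A (∏ j ∈ Finset.range i, (X - C (θ j))) * Es0 =
        (ζ i / ∏ j ∈ Finset.Icc 1 i, (θs 0 - θs j)) • Es0) :
    Es0 * Ed * Es0 =
      ((∏ j ∈ Finset.range d, (θ d - θ j))⁻¹ *
        (∏ j ∈ Finset.Icc 1 d, (θs 0 - θs j))⁻¹ * ζ d) • Es0 ∧
    (Es0 * Ed * Es0 ≠ 0 ↔ ζ d ≠ 0) := by
  have hτ : ∏ j ∈ range d, (θ d - θ j) ≠ 0 := prod_sub_ne_zero fun j hj ↦
    hθ d j le_rfl (mem_range.mp hj).le (mem_range.mp hj).ne'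
  have hη : ∏ j ∈ Icc 1 d, (θs 0 - θs j) ≠ 0 := prod_sub_ne_zero fun j hj ↦
    hθs 0 j d.zero_le (mem_Icc.mp hj).2 (Nat.ne_of_lt (mem_Icc.mp hj).1)
  have key : Es0 * Ed * Es0 = ((∏ j ∈ range d, (θ d - θ j))⁻¹ *
      (∏ j ∈ Icc 1 d, (θs 0 - θs j))⁻¹ * ζ d) • Es0 := by
    rw [hEd, mul_smul_mul_eq_smul (hζ d le_rfl), div_eq_inv_mul, ← mul_assoc]
  refine ⟨key, ?_⟩
  rw [key, Ne, smul_eq_zero_iff_left hEs0]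
  simp [hτ, hη]

theorem stmt_15 {F V : Type*} [Field F] [AddCommGroup V] [Module F V]
    [FiniteDimensional F V] (d : ℕ)
    (A : Module.End F V) (θ θs : ℕ → F)
    (hθ : ∀ i j : ℕ, i ≤ d → j ≤ d → i ≠ j → θ i ≠ θ j)
    (hθs : ∀ i j : ℕ, i ≤ d → j ≤ d → i ≠ j → θs i ≠ θs j)
    (Es0 : Module.End F V) (hEs0 : Es0 ≠ 0)
    (Ed : Module.End F V)
    (hEd : Ed = (∏ j ∈ Finset.range d, (θ d - θ j))⁻¹ •
      Polynomial.aeval A (∏ j ∈ Finset.range d, (X - C (θ j))))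
    (ζ : ℕ → F)
    (hζ : ∀ i : ℕ, i ≤ d →
      Es0 * Polynomial.aeval A (∏ j ∈ Finset.range i, (X - C (θ j))) * Es0 =
        (ζ i / ∏ j ∈ Finset.Icc 1 i, (θs 0 - θs j)) • Es0) :
    Es0 * Ed * Es0 =
      ((∏ j ∈ Finset.range d, (θ d - θ j))⁻¹ *
        (∏ j ∈ Finset.Icc 1 d, (θs 0 - θs j))⁻¹ * ζ d) • Es0 ∧
    (Es0 * Ed * Es0 ≠ 0 ↔ ζ d ≠ 0) :=
  stmt_15_general d A θ θs hθ hθs Es0 hEs0 Ed hEd ζ hζ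
end

section
/- With the notation of a sharp tridiagonal system: E*_0 E_0 E*_0 = η_d(θ_0)^{−1} η*_d(θ*_0)^{−1} (Σ_{i=0}^d η_{d−i}(θ_0) η*_{d−i}(θ*_0) ζ_i) E*_0 on V, where E_0 = η_d(A)/η_d(θ_0). In particular E*_0E_0E*_0 ≠ 0 if and only if Σ_{i=0}^d η_{d−i}(θ_0) η*_{d−i}(θ*_0) ζ_i ≠ 0. -/
open Polynomial Finset

/-! Expanding `η_d(X) = ∏_{j=1}^d (X - θ_j)` in the basis `τ_i(X) = ∏_{j<i} (X - θ_j)` gives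
`η_d = ∑_i η_{d-i}(θ_0) τ_i`. Compressing `E_0 = η_d(A) / η_d(θ_0)` by `E*_0` therefore turns each
`τ_i(A)` into `ζ_i / ∏_{j=1}^i (θ*_0 - θ*_j)` times `E*_0`, and multiplying numerator and
denominator by `η*_{d-i}(θ*_0)` brings all these denominators to `η*_d(θ*_0)`. The scalars
`η_d(θ_0)` and `η*_d(θ*_0)` are nonzero because the eigenvalues are distinct. -/

theorem prod_range_sub_eq_prod_Ioc {M : Type*} [CommMonoid M] (f : ℕ → M) {n d : ℕ}
    (h : n ≤ d) : ∏ j ∈ range n, f (d - j) = ∏ j ∈ Ioc (d - n) d, f j := by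
  induction n with
  | zero => simp
  | succ n ih =>
    rw [prod_range_succ, ih (by omega), mul_comm,
      ← prod_Ioc_consecutive f (Nat.sub_le_sub_left n.le_succ d) (Nat.sub_le d n),
      show d - n = d - (n + 1) + 1 by omega, Nat.Ioc_succ_singleton, prod_singleton]

theorem prod_Ioc_X_sub_C_eq_sum {R : Type*} [CommRing R] (θ : ℕ → R) (m : ℕ) :
    ∏ j ∈ Ioc 0 m, (X - C (θ j)) =
      ∑ i ∈ range (m + 1), C (∏ j ∈ Ioc i m, (θ 0 - θ j)) * ∏ j ∈ range i, (X - C (θ j)) := by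
  induction m with
  | zero => simp
  | succ m ih =>
    -- `X - θ_{m+1} = (X - θ_0) + (θ_0 - θ_{m+1})`, and `(X - θ_0) ∏_{0<j≤m} (X - θ_j) = τ_{m+1}`
    have hcoef : ∀ i ∈ range (m + 1), C (∏ j ∈ Ioc i (m + 1), (θ 0 - θ j)) =
        C (θ 0 - θ (m + 1)) * C (∏ j ∈ Ioc i m, (θ 0 - θ j)) := fun i hi => by
      rw [prod_Ioc_succ_top (by simpa [Nat.lt_succ_iff] using hi), C_mul, mul_comm]
    have htop : ∏ j ∈ range (m + 1), (X - C (θ j)) =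
        (X - C (θ 0)) * ∏ j ∈ Ioc 0 m, (X - C (θ j)) := by
      rw [Nat.range_succ_eq_Icc_zero, Icc_eq_cons_Ioc m.zero_le, prod_cons]
    rw [sum_range_succ, sum_congr rfl fun i hi => by rw [hcoef i hi, mul_assoc], ← mul_sum, ← ih,
      Ioc_self, prod_empty, C_1, one_mul, htop, prod_Ioc_succ_top m.zero_le, C_sub]
    ring

theorem mul_aeval_sum_mul {ι R A : Type*} [CommSemiring R] [Semiring A] [Algebra R A]
    (a e : A) (s : Finset ι) (c z : ι → R) (p : ι → R[X])
    (h : ∀ i ∈ s, e * aeval a (p i) * e = z i • e) :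
    e * aeval a (∑ i ∈ s, C (c i) * p i) * e = (∑ i ∈ s, c i * z i) • e := by
  simp only [← smul_eq_C_mul, map_sum, map_smul, mul_sum, sum_mul, sum_smul,
    Algebra.mul_smul_comm, Algebra.smul_mul_assoc]
  exact sum_congr rfl fun i hi => by rw [h i hi, smul_smul]

theorem prod_range_X_sub_C_sub_eq_sum {R : Type*} [CommRing R] (θ : ℕ → R) (d : ℕ) :
    ∏ j ∈ range d, (X - C (θ (d - j))) =
      ∑ i ∈ range (d + 1),
        C (∏ j ∈ range (d - i), (θ 0 - θ (d - j))) * ∏ j ∈ range i, (X - C (θ j)) := by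
  rw [prod_range_sub_eq_prod_Ioc (fun j => X - C (θ j)) le_rfl, Nat.sub_self,
    prod_Ioc_X_sub_C_eq_sum]
  refine sum_congr rfl fun i hi => ?_
  rw [prod_range_sub_eq_prod_Ioc (fun j => θ 0 - θ j) (Nat.sub_le d i),
    Nat.sub_sub_self (Nat.lt_succ_iff.1 (mem_range.1 hi))]

theorem prod_range_sub_mul_inv_prod_Icc {K : Type*} [Field K] (f : ℕ → K) {i d : ℕ} (hi : i ≤ d)
    (hf : ∀ j ∈ Ioc i d, f j ≠ 0) :
    (∏ j ∈ range (d - i), f (d - j)) * (∏ j ∈ Icc 1 d, f j)⁻¹ = (∏ j ∈ Icc 1 i, f j)⁻¹ := by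
  have hQ : ∏ j ∈ Ioc i d, f j ≠ 0 := prod_ne_zero_iff.2 hf
  have hIcc (n : ℕ) : Icc 1 n = Ioc 0 n := Icc_add_one_left_eq_Ioc 0 n
  rw [prod_range_sub_eq_prod_Ioc f (Nat.sub_le d i), Nat.sub_sub_self hi, hIcc, hIcc,
    ← prod_Ioc_consecutive f i.zero_le hi, mul_inv_rev, mul_inv_cancel_left₀ hQ]

theorem stmt_16_general {F V : Type*} [Field F] [AddCommGroup V] [Module F V]
    (d : ℕ)
    (A : Module.End F V) (θ θs : ℕ → F)
    (hθ : ∀ i j : ℕ, i ≤ d → j ≤ d → i ≠ j → θ i ≠ θ j)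
    (hθs : ∀ i j : ℕ, i ≤ d → j ≤ d → i ≠ j → θs i ≠ θs j)
    (Es0 : Module.End F V) (hEs0 : Es0 ≠ 0)
    (E0 : Module.End F V)
    (hE0 : E0 = ((∏ j ∈ Finset.range d, (θ 0 - θ (d - j)))⁻¹ •
      Polynomial.aeval A (∏ j ∈ Finset.range d, (X - C (θ (d - j))))))
    (ζ : ℕ → F)
    (hζ : ∀ i : ℕ, i ≤ d →
      Es0 * Polynomial.aeval A (∏ j ∈ Finset.range i, (X - C (θ j))) * Es0 =
        (ζ i / ∏ j ∈ Finset.Icc 1 i, (θs 0 - θs j)) • Es0) :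
    Es0 * E0 * Es0 =
      ((∏ j ∈ Finset.range d, (θ 0 - θ (d - j)))⁻¹ *
        (∏ j ∈ Finset.Icc 1 d, (θs 0 - θs j))⁻¹ *
        (∑ i ∈ Finset.range (d + 1),
          (∏ j ∈ Finset.range (d - i), (θ 0 - θ (d - j))) *
          (∏ j ∈ Finset.range (d - i), (θs 0 - θs (d - j))) * ζ i)) • Es0 ∧
    (Es0 * E0 * Es0 ≠ 0 ↔
      (∑ i ∈ Finset.range (d + 1),
        (∏ j ∈ Finset.range (d - i), (θ 0 - θ (d - j))) *
        (∏ j ∈ Finset.range (d - i), (θs 0 - θs (d - j))) * ζ i) ≠ 0) := by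
  set η := ∏ j ∈ range d, (θ 0 - θ (d - j))
  set ηs := ∏ j ∈ Icc 1 d, (θs 0 - θs j)
  set S := ∑ i ∈ range (d + 1),
    (∏ j ∈ range (d - i), (θ 0 - θ (d - j))) * (∏ j ∈ range (d - i), (θs 0 - θs (d - j))) * ζ i
  have hθs0 (j : ℕ) (hj : j ∈ Ioc 0 d) : θs 0 - θs j ≠ 0 := by
    rw [mem_Ioc] at hj
    exact sub_ne_zero.2 (hθs 0 j d.zero_le hj.2 hj.1.ne)
  have hη : η ≠ 0 := prod_ne_zero_iff.2 fun j hj =>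
    sub_ne_zero.2 (hθ 0 (d - j) d.zero_le (d.sub_le j) (by rw [mem_range] at hj; omega))
  have hηs : ηs ≠ 0 := prod_ne_zero_iff.2 fun j hj =>
    hθs0 j (by rw [mem_Icc] at hj; rw [mem_Ioc]; omega)
  have key : Es0 * E0 * Es0 = (η⁻¹ * ηs⁻¹ * S) • Es0 := by
    rw [hE0, Algebra.mul_smul_comm, Algebra.smul_mul_assoc, prod_range_X_sub_C_sub_eq_sum,
      mul_aeval_sum_mul A Es0 _ _ _ _ fun i hi => hζ i (Nat.lt_succ_iff.1 (mem_range.1 hi)),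
      smul_smul, mul_assoc]
    congr 2
    simp only [S, mul_sum]
    refine sum_congr rfl fun i hi => ?_
    rw [div_eq_mul_inv, ← prod_range_sub_mul_inv_prod_Icc _ (Nat.lt_succ_iff.1 (mem_range.1 hi))
      fun j hj => hθs0 j (Ioc_subset_Ioc_left i.zero_le hj)]
    ring
  refine ⟨key, ?_⟩
  rw [key]
  simp [hη, hηs, hEs0]

theorem stmt_16 {F V : Type*} [Field F] [AddCommGroup V] [Module F V]
    [FiniteDimensional F V] (d : ℕ)
    (A : Module.End F V) (θ θs : ℕ → F)
    (hθ : ∀ i j : ℕ, i ≤ d → j ≤ d → i ≠ j → θ i ≠ θ j)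
    (hθs : ∀ i j : ℕ, i ≤ d → j ≤ d → i ≠ j → θs i ≠ θs j)
    (Es0 : Module.End F V) (hEs0 : Es0 ≠ 0)
    (E0 : Module.End F V)
    (hE0 : E0 = ((∏ j ∈ Finset.range d, (θ 0 - θ (d - j)))⁻¹ •
      Polynomial.aeval A (∏ j ∈ Finset.range d, (X - C (θ (d - j))))))
    (ζ : ℕ → F)
    (hζ : ∀ i : ℕ, i ≤ d →
      Es0 * Polynomial.aeval A (∏ j ∈ Finset.range i, (X - C (θ j))) * Es0 =
        (ζ i / ∏ j ∈ Finset.Icc 1 i, (θs 0 - θs j)) • Es0) :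
    Es0 * E0 * Es0 =
      ((∏ j ∈ Finset.range d, (θ 0 - θ (d - j)))⁻¹ *
        (∏ j ∈ Finset.Icc 1 d, (θs 0 - θs j))⁻¹ *
        (∑ i ∈ Finset.range (d + 1),
          (∏ j ∈ Finset.range (d - i), (θ 0 - θ (d - j))) *
          (∏ j ∈ Finset.range (d - i), (θs 0 - θs (d - j))) * ζ i)) • Es0 ∧
    (Es0 * E0 * Es0 ≠ 0 ↔
      (∑ i ∈ Finset.range (d + 1),
        (∏ j ∈ Finset.range (d - i), (θ 0 - θ (d - j))) *
        (∏ j ∈ Finset.range (d - i), (θs 0 - θs (d - j))) * ζ i) ≠ 0) :=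
  stmt_16_general d A θ θs hθ hθs Es0 hEs0 E0 hE0 ζ hζ
end

section
/- Let F be a field, d ≥ 1, q nonzero with q^{2i} ≠ 1 for 1 ≤ i ≤ d, b, b*, c, c* ∈ F, and suppose θ_i = a + bq^{2i−d} + cq^{d−2i}, θ*_i = a* + b*q^{2i−d} + c*q^{d−2i}. Then (θ*_1 − θ*_d)(θ_{d−1} − θ_d) − (θ*_0 − θ*_1)(θ_0 − θ_{d−1}) = (q − q^{−1})(q^{d−1} − q^{1−d})(q^d − q^{−d})(bb* − cc*). -/
/-! Writing `d = i + k`, the exponent `2i - d` becomes `i - k`, so that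
`θ_i = a + b q^i / q^k + c q^k / q^i` involves natural powers only. For `d = n + 1` the four
eigenvalues in the identity are then rational functions of `q` and `q^n`, and the identity is a
field identity in these. -/

section
variable {F : Type*} [Field F] {q : F}

theorem zpow_two_mul_sub_eq_div (hq : q ≠ 0) {i k d : ℕ} (h : i + k = d) :
    q ^ (2 * (i : ℤ) - d) = q ^ i / q ^ k := by
  rw [← h, show 2 * (i : ℤ) - ↑(i + k) = i - k by push_cast; ring, zpow_sub₀ hq, zpow_natCast,
    zpow_natCast]

theorem eq_add_mul_pow_div_pow_of_add_eq (hq : q ≠ 0) {a b c : F} {d : ℕ} {θ : ℕ → F}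
    (hθ : ∀ i : ℕ, i ≤ d → θ i = a + b * q ^ (2 * (i : ℤ) - d) + c * q ^ ((d : ℤ) - 2 * i))
    {i k : ℕ} (h : i + k = d) : θ i = a + b * (q ^ i / q ^ k) + c * (q ^ k / q ^ i) := by
  rw [hθ i (by omega), zpow_two_mul_sub_eq_div hq h, show (d : ℤ) - 2 * i = 2 * k - d by omega,
    zpow_two_mul_sub_eq_div hq (by omega : k + i = d)]

end

theorem stmt_17 {F : Type*} [Field F] (d : ℕ) (hd : 1 ≤ d)
    (q a b c as bs cs : F) (hq : q ≠ 0)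
    (θ θs : ℕ → F)
    (hθ : ∀ i : ℕ, i ≤ d → θ i = a + b * q ^ (2 * (i : ℤ) - (d : ℤ)) + c * q ^ ((d : ℤ) - 2 * (i : ℤ)))
    (hθs : ∀ i : ℕ, i ≤ d → θs i = as + bs * q ^ (2 * (i : ℤ) - (d : ℤ)) + cs * q ^ ((d : ℤ) - 2 * (i : ℤ))) :
    (θs 1 - θs d) * (θ (d - 1) - θ d) - (θs 0 - θs 1) * (θ 0 - θ (d - 1)) =
      (q - q⁻¹) * (q ^ ((d : ℤ) - 1) - q ^ (1 - (d : ℤ))) * (q ^ (d : ℤ) - q ^ (-(d : ℤ))) *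
        (b * bs - c * cs) := by
  obtain ⟨n, rfl⟩ : ∃ n, d = n + 1 := ⟨d - 1, by omega⟩
  rw [Nat.add_sub_cancel,
    eq_add_mul_pow_div_pow_of_add_eq hq hθ (zero_add _),
    eq_add_mul_pow_div_pow_of_add_eq hq hθ (rfl : n + 1 = n + 1),
    eq_add_mul_pow_div_pow_of_add_eq hq hθ (add_zero _),
    eq_add_mul_pow_div_pow_of_add_eq hq hθs (zero_add _),
    eq_add_mul_pow_div_pow_of_add_eq hq hθs (add_comm 1 n),
    eq_add_mul_pow_div_pow_of_add_eq hq hθs (add_zero _)]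
  rw [Nat.cast_add_one, add_sub_cancel_right, show (1 : ℤ) - (n + 1) = -n by ring,
    ← Nat.cast_add_one, zpow_neg, zpow_neg, zpow_natCast, zpow_natCast]
  field_simp
  ring
end
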